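/- arXiv:2512.02767 — 2 statements merged into one kernel-verified Lean document; each statement's English description precedes it below -/
import Mathlib

section
/- For any three jointly distributed random variables X, Y, Z on a finite probability space, H(Z) ≤ H(Z|X) + H(Z|Y) + I(X:Y). -/
open scoped BigOperators

namespace PaperIngleton

open Classical in
/-- Probability of an event under a pmf `p` on a finite sample space. -/
noncomputable def prob {Ω : Type*} [Fintype Ω] (p : Ω → ℝ) (E : Ω → Prop) : ℝ :=
  ∑ ω, if E ω then p ω else 0

/-- Shannon entropy of a finitely-valued random variable `X` under pmf `p`. -/
noncomputable def ent {Ω S : Type*} [Fintype Ω] [Fintype S] (p : Ω → ℝ) (X : Ω → S) : ℝ :=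
  -∑ s : S, prob p (fun ω => X ω = s) * Real.log (prob p (fun ω => X ω = s))

/-- Conditional entropy `H(X|Y)`. -/
noncomputable def condEnt {Ω S T : Type*} [Fintype Ω] [Fintype S] [Fintype T]
    (p : Ω → ℝ) (X : Ω → S) (Y : Ω → T) : ℝ :=
  ent p (fun ω => (X ω, Y ω)) - ent p Y

/-- Mutual information `I(X:Y)`. -/
noncomputable def mi {Ω S T : Type*} [Fintype Ω] [Fintype S] [Fintype T]
    (p : Ω → ℝ) (X : Ω → S) (Y : Ω → T) : ℝ :=
  ent p X + ent p Y - ent p (fun ω => (X ω, Y ω))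

/-- Conditional mutual information `I(X:Y|Z)`. -/
noncomputable def cmi {Ω S T U : Type*} [Fintype Ω] [Fintype S] [Fintype T] [Fintype U]
    (p : Ω → ℝ) (X : Ω → S) (Y : Ω → T) (Z : Ω → U) : ℝ :=
  ent p (fun ω => (X ω, Z ω)) + ent p (fun ω => (Y ω, Z ω))
    - ent p (fun ω => (X ω, Y ω, Z ω)) - ent p Z

end PaperIngleton

/-!
Unfolding the definitions, the claim is `H(X,Y) + H(Z) ≤ H(Z,X) + H(Z,Y)`. It follows from
monotonicity `H(X,Y) ≤ H(Z,X,Y)` and submodularity `H(Z,X,Y) + H(Z) ≤ H(Z,X) + H(Z,Y)`. For each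
value `c` of `Z`, submodularity is subadditivity `H(X,Y) ≤ H(X) + H(Y)` for the unnormalised slice
`q a b = P(Z = c, X = a, Y = b)`, with a correction `t log t` for its total mass `t`; and that is
`log u ≤ u - 1` at `u = r a * s b / (t * q a b)`, summed against `q`, where `r` and `s` are the
marginals of the slice.
-/

open Real

namespace PaperIngleton

section Prob

variable {Ω B : Type*} [Fintype Ω] {p : Ω → ℝ}

lemma prob_nonneg (hp : ∀ ω, 0 ≤ p ω) (E : Ω → Prop) : 0 ≤ prob p E := by
  classical
  exact Finset.sum_nonneg fun ω _ => by split_ifs <;> simp [hp ω]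

lemma prob_congr {E F : Ω → Prop} (h : ∀ ω, E ω ↔ F ω) : prob p E = prob p F := by
  obtain rfl : E = F := funext fun ω => propext (h ω)
  rfl

lemma prob_eq_sum_prob_and [Fintype B] (E : Ω → Prop) (V : Ω → B) :
    prob p E = ∑ b, prob p (fun ω => E ω ∧ V ω = b) := by
  classical
  unfold prob
  rw [Finset.sum_comm]
  refine Finset.sum_congr rfl fun ω _ => ?_
  by_cases hE : E ω <;> simp [hE]

end Prob

lemma mul_log_add_mul_log_le {a x y z : ℝ} (ha : 0 ≤ a) (hx : a ≤ x) (hy : a ≤ y) (hz : x ≤ z) :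
    a * log x + a * log y ≤ a * log a + a * log z + (x * y / z - a) := by
  obtain rfl | ha := ha.eq_or_lt
  · simpa using div_nonneg (mul_nonneg hx hy) (hx.trans hz)
  have hx0 : 0 < x := ha.trans_le hx
  have hy0 : 0 < y := ha.trans_le hy
  have hz0 : 0 < z := hx0.trans_le hz
  have hlog := log_le_sub_one_of_pos (show 0 < x * y / (z * a) by positivity)
  rw [log_div (by positivity) (by positivity), log_mul hx0.ne' hy0.ne',
    log_mul hz0.ne' ha.ne'] at hlog
  have key : a * (x * y / (z * a)) = x * y / z := by field_simp
  nlinarith [mul_le_mul_of_nonneg_left hlog ha.le]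

lemma sum_mul_log_marginals_le {A B : Type*} [Fintype A] [Fintype B] (q : A → B → ℝ)
    (hq : ∀ a b, 0 ≤ q a b) :
    (∑ a, (∑ b, q a b) * log (∑ b, q a b)) + ∑ b, (∑ a, q a b) * log (∑ a, q a b)
      ≤ (∑ a, ∑ b, q a b * log (q a b)) + (∑ a, ∑ b, q a b) * log (∑ a, ∑ b, q a b) := by
  set r : A → ℝ := fun a => ∑ b, q a b
  set s : B → ℝ := fun b => ∑ a, q a b
  set t := ∑ a, r a
  have ht : ∑ b, s b = t := Finset.sum_comm
  have hr : ∀ a, 0 ≤ r a := fun a => Finset.sum_nonneg fun b _ => hq a b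
  have hqr : ∀ a b, q a b ≤ r a := fun a b =>
    Finset.single_le_sum (fun b _ => hq a b) (Finset.mem_univ b)
  have hqs : ∀ a b, q a b ≤ s b := fun a b =>
    Finset.single_le_sum (f := fun a => q a b) (fun a _ => hq a b) (Finset.mem_univ a)
  have hrt : ∀ a, r a ≤ t := fun a => Finset.single_le_sum (fun a _ => hr a) (Finset.mem_univ a)
  have pointwise := Finset.sum_le_sum fun a (_ : a ∈ Finset.univ) =>
    Finset.sum_le_sum fun b (_ : b ∈ Finset.univ) =>
      mul_log_add_mul_log_le (hq a b) (hqr a b) (hqs a b) (hrt a)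
  have hr_log : ∑ a, ∑ b, q a b * log (r a) = ∑ a, r a * log (r a) := by
    simp only [← Finset.sum_mul, r]
  have hs_log : ∑ a, ∑ b, q a b * log (s b) = ∑ b, s b * log (s b) := by
    rw [Finset.sum_comm]
    simp only [← Finset.sum_mul, s]
  have ht_log : ∑ a, ∑ b, q a b * log t = t * log t := by
    simp only [← Finset.sum_mul, r, t]
  have hcross : ∑ a, ∑ b, (r a * s b / t - q a b) = 0 := by
    simp only [Finset.sum_sub_distrib, ← Finset.mul_sum, ← Finset.sum_div, ← Finset.sum_mul, ht]
    rw [mul_self_div_self, sub_self]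
  simp only [Finset.sum_add_distrib] at pointwise
  linarith

section Entropy

variable {Ω A B C : Type*} [Fintype Ω] [Fintype A] [Fintype B] [Fintype C] {p : Ω → ℝ}

lemma ent_le_ent_pair (hp : ∀ ω, 0 ≤ p ω) (W : Ω → A) (V : Ω → B) :
    ent p V ≤ ent p (fun ω => (W ω, V ω)) := by
  simp only [ent, Fintype.sum_prod_type, Prod.mk.injEq, neg_le_neg_iff]
  rw [Finset.sum_comm]
  refine Finset.sum_le_sum fun b _ => ?_
  set q : A → ℝ := fun a => prob p (fun ω => W ω = a ∧ V ω = b)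
  have hmarg : prob p (fun ω => V ω = b) = ∑ a, q a := by
    rw [prob_eq_sum_prob_and _ W]
    exact Finset.sum_congr rfl fun a _ => prob_congr fun ω => and_comm
  rw [hmarg, Finset.sum_mul]
  have hq : ∀ a, 0 ≤ q a := fun a => prob_nonneg hp _
  refine Finset.sum_le_sum fun a _ => show q a * log (q a) ≤ q a * log (∑ a, q a) from ?_
  obtain h0 | hpos := (hq a).eq_or_lt
  · simp [← h0]
  · have hle : q a ≤ ∑ a, q a := Finset.single_le_sum (fun a _ => hq a) (Finset.mem_univ a)
    exact mul_le_mul_of_nonneg_left (log_le_log hpos hle) hpos.le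

lemma ent_triple_add_ent_le (hp : ∀ ω, 0 ≤ p ω) (Z : Ω → C) (X : Ω → A) (Y : Ω → B) :
    ent p (fun ω => (Z ω, X ω, Y ω)) + ent p Z
      ≤ ent p (fun ω => (Z ω, X ω)) + ent p (fun ω => (Z ω, Y ω)) := by
  set q : C → A → B → ℝ := fun c a b => prob p (fun ω => Z ω = c ∧ X ω = a ∧ Y ω = b)
  have hX : ∀ c a, prob p (fun ω => Z ω = c ∧ X ω = a) = ∑ b, q c a b := fun c a => by
    rw [prob_eq_sum_prob_and _ Y]
    simp only [and_assoc, q]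
  have hY : ∀ c b, prob p (fun ω => Z ω = c ∧ Y ω = b) = ∑ a, q c a b := fun c b => by
    rw [prob_eq_sum_prob_and _ X]
    exact Finset.sum_congr rfl fun a _ => prob_congr fun ω => by tauto
  have hZ : ∀ c, prob p (fun ω => Z ω = c) = ∑ a, ∑ b, q c a b := fun c => by
    rw [prob_eq_sum_prob_and _ X]
    exact Finset.sum_congr rfl fun a _ => hX c a
  simp only [ent, Fintype.sum_prod_type, Prod.mk.injEq, hX, hY, hZ]
  have := Finset.sum_le_sum fun c (_ : c ∈ Finset.univ) =>
    sum_mul_log_marginals_le (q c) fun a b => prob_nonneg hp _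
  simp only [Finset.sum_add_distrib] at this
  linarith

end Entropy

theorem stmt0_general {Ω S T U : Type} [Fintype Ω] [Fintype S] [Fintype T] [Fintype U]
    (p : Ω → ℝ) (hp : ∀ ω, 0 ≤ p ω)
    (X : Ω → S) (Y : Ω → T) (Z : Ω → U) :
    ent p Z ≤ condEnt p Z X + condEnt p Z Y + mi p X Y := by
  have monotone := ent_le_ent_pair hp Z (fun ω => (X ω, Y ω))
  have submodular := ent_triple_add_ent_le hp Z X Y
  unfold condEnt mi
  linarith

theorem stmt0 {Ω S T U : Type} [Fintype Ω] [Fintype S] [Fintype T] [Fintype U]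
    (p : Ω → ℝ) (hp : ∀ ω, 0 ≤ p ω) (hp1 : ∑ ω, p ω = 1)
    (X : Ω → S) (Y : Ω → T) (Z : Ω → U) :
    ent p Z ≤ condEnt p Z X + condEnt p Z Y + mi p X Y :=
  stmt0_general p hp X Y Z

end PaperIngleton
end

section
/- For any four jointly distributed random variables X, Y, W, A on a finite probability space, H(W|A) + I(X:Y|W,A) ≤ I(X:Y|A) + H(W|X,A) + H(W|Y,A). -/
/-!
Unfolding the definitions, the entropies H(W,A), H(X,A), H(Y,A) cancel and the inequality
becomes H(X,W,A) + H(Y,W,A) - H(X,Y,W,A) ≤ H(W,X,A) + H(W,Y,A) - H(X,Y,A). The first two terms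
agree on both sides up to reordering the coordinates, so what remains is H(X,Y,A) ≤ H(X,Y,W,A):
entropy does not increase under a deterministic function, since the fibre of a function of Z
through a sample point contains the fibre of Z.
-/

open scoped BigOperators

namespace PaperIngleton

open Classical

variable {Ω S T : Type*} [Fintype Ω] [Fintype S] [Fintype T]

lemma le_prob (p : Ω → ℝ) (hp : ∀ ω, 0 ≤ p ω) {E : Ω → Prop} {ω : Ω} (hω : E ω) :
    p ω ≤ prob p E := by
  rw [prob]
  have := Finset.single_le_sum (f := fun ω' => if E ω' then p ω' else 0)
    (fun ω' _ => by by_cases h : E ω' <;> simp [h, hp ω']) (Finset.mem_univ ω)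
  simpa [hω] using this

lemma prob_mono (p : Ω → ℝ) (hp : ∀ ω, 0 ≤ p ω) {E F : Ω → Prop} (h : ∀ ω, E ω → F ω) :
    prob p E ≤ prob p F := by
  refine Finset.sum_le_sum fun ω _ => ?_
  by_cases hE : E ω
  · simp [hE, h ω hE]
  · by_cases hF : F ω <;> simp [hE, hF, hp ω]

lemma ent_eq_neg_sum_mul_log_prob_fiber (p : Ω → ℝ) (X : Ω → S) :
    ent p X = -∑ ω, p ω * Real.log (prob p (fun ω' => X ω' = X ω)) := by
  rw [ent, neg_inj]
  calc ∑ s, prob p (fun ω => X ω = s) * Real.log (prob p (fun ω => X ω = s))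
      = ∑ s, ∑ ω, if X ω = s then p ω * Real.log (prob p (fun ω' => X ω' = s)) else 0 := by
        refine Finset.sum_congr rfl fun s _ => ?_
        rw [prob, Finset.sum_mul]
        refine Finset.sum_congr rfl fun ω _ => ?_
        by_cases h : X ω = s <;> simp [h]
    _ = ∑ ω, ∑ s, if X ω = s then p ω * Real.log (prob p (fun ω' => X ω' = s)) else 0 :=
        Finset.sum_comm
    _ = ∑ ω, p ω * Real.log (prob p (fun ω' => X ω' = X ω)) := by simp

lemma ent_comp_le (p : Ω → ℝ) (hp : ∀ ω, 0 ≤ p ω) (g : S → T) (Z : Ω → S) :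
    ent p (fun ω => g (Z ω)) ≤ ent p Z := by
  rw [ent_eq_neg_sum_mul_log_prob_fiber, ent_eq_neg_sum_mul_log_prob_fiber, neg_le_neg_iff]
  refine Finset.sum_le_sum fun ω _ => ?_
  rcases (hp ω).eq_or_lt with h0 | h0
  · simp [← h0]
  · refine mul_le_mul_of_nonneg_left (Real.log_le_log ?_ ?_) (hp ω)
    · exact h0.trans_le (le_prob p hp rfl)
    · exact prob_mono p hp fun ω' h => by rw [h]

lemma ent_comp_of_injective (p : Ω → ℝ) {e : S → T} (he : Function.Injective e) (Z : Ω → S) :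
    ent p (fun ω => e (Z ω)) = ent p Z := by
  simp only [ent_eq_neg_sum_mul_log_prob_fiber, he.eq_iff]

lemma ent_prod_left_comm {U : Type*} [Fintype U] (p : Ω → ℝ) (X : Ω → S) (Y : Ω → T)
    (Z : Ω → U) : ent p (fun ω => (X ω, Y ω, Z ω)) = ent p (fun ω => (Y ω, X ω, Z ω)) :=
  ent_comp_of_injective p (e := fun z : T × S × U => (z.2.1, z.1, z.2.2))
    (fun ⟨_, _, _⟩ ⟨_, _, _⟩ h => by simp_all only [Prod.mk.injEq]) fun ω => (Y ω, X ω, Z ω)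

theorem stmt4_general {Ω S T V R : Type} [Fintype Ω] [Fintype S] [Fintype T] [Fintype V] [Fintype R]
    (p : Ω → ℝ) (hp : ∀ ω, 0 ≤ p ω)
    (X : Ω → S) (Y : Ω → T) (W : Ω → V) (A : Ω → R) :
    condEnt p W A + cmi p X Y (fun ω => (W ω, A ω))
      ≤ cmi p X Y A + condEnt p W (fun ω => (X ω, A ω))
        + condEnt p W (fun ω => (Y ω, A ω)) := by
  have hX := ent_prod_left_comm p W X A
  have hY := ent_prod_left_comm p W Y A
  have hmono : ent p (fun ω => (X ω, Y ω, A ω)) ≤ ent p (fun ω => (X ω, Y ω, W ω, A ω)) :=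
    ent_comp_le p hp (fun z : S × T × V × R => (z.1, z.2.1, z.2.2.2))
      fun ω => (X ω, Y ω, W ω, A ω)
  simp only [condEnt, cmi]
  linarith

theorem stmt4 {Ω S T V R : Type} [Fintype Ω] [Fintype S] [Fintype T] [Fintype V] [Fintype R]
    (p : Ω → ℝ) (hp : ∀ ω, 0 ≤ p ω) (hp1 : ∑ ω, p ω = 1)
    (X : Ω → S) (Y : Ω → T) (W : Ω → V) (A : Ω → R) :
    condEnt p W A + cmi p X Y (fun ω => (W ω, A ω))
      ≤ cmi p X Y A + condEnt p W (fun ω => (X ω, A ω))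
        + condEnt p W (fun ω => (Y ω, A ω)) :=
  stmt4_general p hp X Y W A

end PaperIngleton
end
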